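/- Let R = (<₁, <₂, <₃) be a standard representation of a finite set V with |V| ≥ 4. Then every vertex of the graph Σ₂(R) has degree at least 3. -/

import Mathlib

open SimpleGraph

variable {V : Type*}

/-- The graph Σ₂(R) for a triple of linear orders R = (l₁, l₂, l₃) on V:
`x` and `y` are adjacent iff every other vertex `z` lies above both `x` and `y`
in one of the three orders. -/
def Sigma2 (l₁ l₂ l₃ : LinearOrder V) : SimpleGraph V where
  Adj x y := x ≠ y ∧ ∀ z, z ≠ x → z ≠ y →
    (l₁.lt x z ∧ l₁.lt y z) ∨ (l₂.lt x z ∧ l₂.lt y z) ∨ (l₃.lt x z ∧ l₃.lt y z)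
  symm := ⟨by
    rintro x y ⟨hxy, h⟩
    exact ⟨hxy.symm, fun z hzy hzx => by rcases h z hzx hzy with h|h|h <;> tauto⟩⟩
  loopless := ⟨fun x h => h.1 rfl⟩

/-- The three orders have empty intersection: for distinct x, y, some order has x below y. -/
def IsRep (l₁ l₂ l₃ : LinearOrder V) : Prop :=
  ∀ x y : V, x ≠ y → l₁.lt x y ∨ l₂.lt x y ∨ l₃.lt x y

/-- `a` is the maximum element of the linear order `l`. -/
def IsMaxOf (l : LinearOrder V) (a : V) : Prop := ∀ x, x ≠ a → l.lt x a

/-- `a` is among the two smallest elements of `l`: at most one element lies below `a`. -/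
def AmongTwoSmallest (l : LinearOrder V) (a : V) : Prop :=
  ∀ x y, l.lt x a → l.lt y a → x = y

/-- `R = (l₁, l₂, l₃)` is a standard representation with `<ᵢ`-maxima `a₁, a₂, a₃`. -/
structure IsStdRep (l₁ l₂ l₃ : LinearOrder V) (a₁ a₂ a₃ : V) : Prop where
  rep : IsRep l₁ l₂ l₃
  top₁ : IsMaxOf l₁ a₁
  top₂ : IsMaxOf l₂ a₂
  top₃ : IsMaxOf l₃ a₃
  a₁_small₂ : AmongTwoSmallest l₂ a₁
  a₁_small₃ : AmongTwoSmallest l₃ a₁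
  a₂_small₁ : AmongTwoSmallest l₁ a₂
  a₂_small₃ : AmongTwoSmallest l₃ a₂
  a₃_small₁ : AmongTwoSmallest l₁ a₃
  a₃_small₂ : AmongTwoSmallest l₂ a₃

/-- The restriction of a linear order on `V` to `V \ {b}`. -/
def restrictOrder (l : LinearOrder V) (b : V) : LinearOrder {x : V // x ≠ b} :=
  @LinearOrder.lift' _ _ l Subtype.val Subtype.val_injective

/-!
A vertex `v` other than the maxima `aᵢ` has, for each `i`, a neighbour above it in `<ᵢ` and below
it in the two other orders (the `<ᵢ`-least such vertex; `aᵢ` is a candidate), and these three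
neighbours are distinct. The maximum `a₁` is adjacent to `a₂` and `a₃`, the two smallest elements
of `<₃` and `<₂`, and to its `<₁`-predecessor. Rotating the three orders covers `a₂` and `a₃`.
-/

namespace LinearOrder

variable (l : LinearOrder V) {x y z : V}

protected lemma lt_trans (h : l.lt x y) (h' : l.lt y z) : l.lt x z := @lt_trans _ _ _ _ _ h h'

protected lemma lt_asymm (h : l.lt x y) (h' : l.lt y x) : False := @lt_asymm _ _ _ _ h h'

protected lemma lt_or_gt_of_ne (h : x ≠ y) : l.lt x y ∨ l.lt y x := @lt_or_gt_of_ne _ l _ _ h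

end LinearOrder

lemma SimpleGraph.three_le_card_neighborSet [Finite V] {G : SimpleGraph V} {v x y z : V}
    (hx : G.Adj v x) (hy : G.Adj v y) (hz : G.Adj v z) (hxy : x ≠ y) (hxz : x ≠ z) (hyz : y ≠ z) :
    3 ≤ Nat.card (G.neighborSet v) := by
  rw [Nat.card_coe_set_eq]
  exact (Set.two_lt_ncard (Set.toFinite _)).2 ⟨x, hx, y, hy, z, hz, hxy, hxz, hyz⟩

section Orders

variable {l : LinearOrder V} {a b x : V}

lemma AmongTwoSmallest.card_le_one (hb : AmongTwoSmallest l b) {s : Finset V}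
    (hs : ∀ x ∈ s, l.lt x b) : s.card ≤ 1 :=
  Finset.card_le_one.2 fun x hx y hy => hb x y (hs x hx) (hs y hy)

lemma AmongTwoSmallest.lt_of_ne (ha : AmongTwoSmallest l a) (hb : AmongTwoSmallest l b)
    (hab : a ≠ b) (hxa : x ≠ a) (hxb : x ≠ b) : l.lt a x := by
  refine (l.lt_or_gt_of_ne hxa).resolve_left fun hx => ?_
  rcases l.lt_or_gt_of_ne hab with h | h
  · exact hxa (hb x a (l.lt_trans hx h) h)
  · exact hxb (ha x b hx h)

lemma IsMaxOf.ne_of_amongTwoSmallest [Fintype V] (hV : 3 ≤ Fintype.card V)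
    (hb : IsMaxOf l b) (ha : AmongTwoSmallest l a) : a ≠ b := by
  classical
  rintro rfl
  have := ha.card_le_one (s := Finset.univ.erase a) fun x hx => hb x (Finset.ne_of_mem_erase hx)
  rw [Finset.card_erase_of_mem (Finset.mem_univ a), Finset.card_univ] at this
  omega

end Orders

lemma Sigma2_cycle (l₁ l₂ l₃ : LinearOrder V) : Sigma2 l₂ l₃ l₁ = Sigma2 l₁ l₂ l₃ := by
  ext x y
  constructor <;> rintro ⟨hxy, h⟩ <;>
    exact ⟨hxy, fun z hzx hzy => by rcases h z hzx hzy with h | h | h <;> tauto⟩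

/-- The `<₁`-least vertex `w` above `v` among those below `v` in `<₂` and `<₃` is adjacent to `v`:
any `z` that is not above both `v` and `w` in `<₁` is, by minimality of `w` or by the
representation property, above `v` and hence above `w` in `<₂` or `<₃`. -/
lemma IsRep.exists_adj [Finite V] {l₁ l₂ l₃ : LinearOrder V} (hrep : IsRep l₁ l₂ l₃) {v u : V}
    (hu₁ : l₁.lt v u) (hu₂ : l₂.lt u v) (hu₃ : l₃.lt u v) :
    ∃ w, (Sigma2 l₁ l₂ l₃).Adj v w ∧ l₁.lt v w ∧ l₂.lt w v ∧ l₃.lt w v := by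
  let _ := l₁
  set S := {z | l₁.lt v z ∧ l₂.lt z v ∧ l₃.lt z v}
  obtain ⟨w, ⟨hw₁, hw₂, hw₃⟩, hmin⟩ := S.exists_min_image id S.toFinite ⟨u, hu₁, hu₂, hu₃⟩
  refine ⟨w, ⟨hw₁.ne, fun z hzv hzw => ?_⟩, hw₁, hw₂, hw₃⟩
  by_cases habove : l₁.lt v z ∧ l₁.lt w z
  · exact Or.inl habove
  have hz : l₂.lt v z ∨ l₃.lt v z := by
    by_contra! hz
    have hz₂ := (l₂.lt_or_gt_of_ne hzv).resolve_right hz.1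
    have hz₃ := (l₃.lt_or_gt_of_ne hzv).resolve_right hz.2
    have hz₁ : l₁.lt v z := (hrep v z hzv.symm).resolve_right (not_or_intro hz.1 hz.2)
    exact habove ⟨hz₁, (hmin z ⟨hz₁, hz₂, hz₃⟩).lt_of_ne (Ne.symm hzw)⟩
  rcases hz with h | h
  · exact Or.inr (Or.inl ⟨h, l₂.lt_trans hw₂ h⟩)
  · exact Or.inr (Or.inr ⟨h, l₃.lt_trans hw₃ h⟩)

namespace IsStdRep

variable {l₁ l₂ l₃ : LinearOrder V} {a₁ a₂ a₃ : V}

lemma cycle (hR : IsStdRep l₁ l₂ l₃ a₁ a₂ a₃) : IsStdRep l₂ l₃ l₁ a₂ a₃ a₁ :=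
  ⟨fun x y hxy => by rcases hR.rep x y hxy with h | h | h <;> tauto,
   hR.top₂, hR.top₃, hR.top₁, hR.a₂_small₃, hR.a₂_small₁, hR.a₃_small₂,
   hR.a₃_small₁, hR.a₁_small₂, hR.a₁_small₃⟩

variable [Fintype V] (hV : 3 ≤ Fintype.card V) (hR : IsStdRep l₁ l₂ l₃ a₁ a₂ a₃)
include hV hR

lemma top₁_ne_top₂ : a₁ ≠ a₂ := hR.top₂.ne_of_amongTwoSmallest hV hR.a₁_small₂

lemma top₁_ne_top₃ : a₁ ≠ a₃ := hR.top₃.ne_of_amongTwoSmallest hV hR.a₁_small₃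

lemma top₁_lt₂ {z : V} (hz₁ : z ≠ a₁) (hz₃ : z ≠ a₃) : l₂.lt a₁ z :=
  hR.a₁_small₂.lt_of_ne hR.a₃_small₂ (hR.top₁_ne_top₃ hV) hz₁ hz₃

lemma top₁_lt₃ {z : V} (hz₁ : z ≠ a₁) (hz₂ : z ≠ a₂) : l₃.lt a₁ z :=
  hR.a₁_small₃.lt_of_ne hR.a₂_small₃ (hR.top₁_ne_top₂ hV) hz₁ hz₂

lemma adj_top₁_top₂ : (Sigma2 l₁ l₂ l₃).Adj a₁ a₂ :=
  ⟨hR.top₁_ne_top₂ hV, fun _ hz₁ hz₂ =>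
    Or.inr (Or.inr ⟨hR.top₁_lt₃ hV hz₁ hz₂, hR.cycle.top₁_lt₂ hV hz₂ hz₁⟩)⟩

lemma adj_top₁_top₃ : (Sigma2 l₁ l₂ l₃).Adj a₁ a₃ :=
  ⟨hR.top₁_ne_top₃ hV, fun _ hz₁ hz₃ =>
    Or.inr (Or.inl ⟨hR.top₁_lt₂ hV hz₁ hz₃, hR.cycle.cycle.top₁_lt₃ hV hz₃ hz₁⟩)⟩

lemma adj_top₁_of_pred {w : V} (hw₁ : w ≠ a₁) (hw₂ : w ≠ a₂) (hw₃ : w ≠ a₃)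
    (hpred : ∀ z, z ≠ a₁ → z ≠ w → l₁.lt z w) : (Sigma2 l₁ l₂ l₃).Adj a₁ w := by
  refine ⟨hw₁.symm, fun z hz₁ hzw => ?_⟩
  by_cases hz₂ : z = a₂
  · subst hz₂
    exact Or.inr (Or.inl ⟨hR.top₂ a₁ (hR.top₁_ne_top₂ hV), hR.top₂ w hw₂⟩)
  by_cases hz₃ : z = a₃
  · subst hz₃
    exact Or.inr (Or.inr ⟨hR.top₃ a₁ (hR.top₁_ne_top₃ hV), hR.top₃ w hw₃⟩)
  rcases hR.rep w z (Ne.symm hzw) with h | h | h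
  · exact (l₁.lt_asymm h (hpred z hz₁ hzw)).elim
  · exact Or.inr (Or.inl ⟨hR.top₁_lt₂ hV hz₁ hz₃, h⟩)
  · exact Or.inr (Or.inr ⟨hR.top₁_lt₃ hV hz₁ hz₂, h⟩)

omit hV in
/-- The third neighbour of `a₁` is its `<₁`-predecessor `w`; it is not `a₂` or `a₃`, since
those have at most one element below them in `<₁` while `w` has at least two. -/
lemma three_le_card_neighborSet_top₁ (hV : 4 ≤ Fintype.card V) :
    3 ≤ Nat.card ((Sigma2 l₁ l₂ l₃).neighborSet a₁) := by
  classical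
  let _ := l₁
  have hne : (Finset.univ.erase a₁).Nonempty := by
    rw [← Finset.card_pos, Finset.card_erase_of_mem (Finset.mem_univ _), Finset.card_univ]
    omega
  obtain ⟨w, hw, hwmax⟩ := (Finset.univ.erase a₁).exists_max_image id hne
  have hw₁ : w ≠ a₁ := Finset.ne_of_mem_erase hw
  have hpred : ∀ z, z ≠ a₁ → z ≠ w → l₁.lt z w := fun z hz₁ hzw =>
    (hwmax z (Finset.mem_erase.2 ⟨hz₁, Finset.mem_univ z⟩)).lt_of_ne hzw
  have hw_ne : ∀ b, AmongTwoSmallest l₁ b → w ≠ b := by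
    rintro b hb rfl
    have := hb.card_le_one (s := (Finset.univ.erase a₁).erase w) fun z hz =>
      hpred z (Finset.ne_of_mem_erase (Finset.mem_of_mem_erase hz)) (Finset.ne_of_mem_erase hz)
    rw [Finset.card_erase_of_mem (Finset.mem_erase.2 ⟨hw₁, Finset.mem_univ w⟩),
      Finset.card_erase_of_mem (Finset.mem_univ _), Finset.card_univ] at this
    omega
  have hV3 : 3 ≤ Fintype.card V := by omega
  exact three_le_card_neighborSet (hR.adj_top₁_top₂ hV3) (hR.adj_top₁_top₃ hV3)
    (hR.adj_top₁_of_pred hV3 hw₁ (hw_ne a₂ hR.a₂_small₁) (hw_ne a₃ hR.a₃_small₁) hpred)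
    (hR.cycle.top₁_ne_top₂ hV3) (hw_ne a₂ hR.a₂_small₁).symm (hw_ne a₃ hR.a₃_small₁).symm

lemma three_le_card_neighborSet_of_ne {v : V} (hv₁ : v ≠ a₁) (hv₂ : v ≠ a₂) (hv₃ : v ≠ a₃) :
    3 ≤ Nat.card ((Sigma2 l₁ l₂ l₃).neighborSet v) := by
  obtain ⟨w₁, hadj₁, hw₁, -, -⟩ :=
    hR.rep.exists_adj (hR.top₁ v hv₁) (hR.top₁_lt₂ hV hv₁ hv₃) (hR.top₁_lt₃ hV hv₁ hv₂)
  obtain ⟨w₂, hadj₂, hw₂, -, hw₂₁⟩ := hR.cycle.rep.exists_adj (hR.top₂ v hv₂)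
    (hR.cycle.top₁_lt₂ hV hv₂ hv₁) (hR.cycle.top₁_lt₃ hV hv₂ hv₃)
  obtain ⟨w₃, hadj₃, hw₃, hw₃₁, hw₃₂⟩ := hR.cycle.cycle.rep.exists_adj (hR.top₃ v hv₃)
    (hR.cycle.cycle.top₁_lt₂ hV hv₃ hv₂) (hR.cycle.cycle.top₁_lt₃ hV hv₃ hv₁)
  rw [Sigma2_cycle] at hadj₂
  rw [Sigma2_cycle, Sigma2_cycle] at hadj₃
  exact three_le_card_neighborSet hadj₁ hadj₂ hadj₃
    (fun h => l₁.lt_asymm hw₁ (h ▸ hw₂₁)) (fun h => l₁.lt_asymm hw₁ (h ▸ hw₃₁))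
    (fun h => l₂.lt_asymm hw₂ (h ▸ hw₃₂))

end IsStdRep

/-- If |V| ≥ 4, every vertex of Σ₂(R) has degree at least 3. -/
theorem stmt15 {V : Type*} [Fintype V] (hV : 4 ≤ Fintype.card V)
    (l₁ l₂ l₃ : LinearOrder V) (a₁ a₂ a₃ : V)
    (hR : IsStdRep l₁ l₂ l₃ a₁ a₂ a₃) :
    ∀ v : V, 3 ≤ Nat.card ((Sigma2 l₁ l₂ l₃).neighborSet v) := by
  intro v
  have hV3 : 3 ≤ Fintype.card V := by omega
  by_cases hv₁ : v = a₁
  · exact hv₁ ▸ hR.three_le_card_neighborSet_top₁ hV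
  by_cases hv₂ : v = a₂
  · rw [← Sigma2_cycle]
    exact hv₂ ▸ hR.cycle.three_le_card_neighborSet_top₁ hV
  by_cases hv₃ : v = a₃
  · rw [← Sigma2_cycle, ← Sigma2_cycle]
    exact hv₃ ▸ hR.cycle.cycle.three_le_card_neighborSet_top₁ hV
  exact hR.three_le_card_neighborSet_of_ne hV3 hv₁ hv₂ hv₃
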